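/- Let p be a permutation of {1,...,n} avoiding the pattern 1324, colored red/blue by the greedy procedure (color p_i blue if coloring it red would create an all-red 132-pattern, or if some blue entry smaller than p_i already exists; otherwise red), and let w(p) be the word over {A,B,C,D} assigning to position i: A if p_i is red and a left-to-right minimum among red entries, B if red but not such a minimum, C if blue and not a right-to-left maximum among blue entries, D if blue and such a maximum. Then w(p) never has a letter C immediately followed by a letter B. -/

import Mathlib

inductive Letter | A | B | C | D
deriving DecidableEq

def NoCB (w : List Letter) : Prop :=
  List.Chain' (fun a b => ¬(a = Letter.C ∧ b = Letter.B)) w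

noncomputable def hword (n : ℕ) : ℕ :=
  Nat.card {w : List Letter // w.length = n ∧ NoCB w}
def redCond (p : ℕ → ℕ) (c : List Bool) (i : ℕ) : Bool :=
  decide (¬ ∃ j < i, ∃ k < i, j < k ∧ c.getD j false = true ∧ c.getD k false = true ∧
      p j < p i ∧ p i < p k) &&
  decide (¬ ∃ j < i, c.getD j false = false ∧ p j < p i)

def colorsAux (p : ℕ → ℕ) : ℕ → List Bool
  | 0 => []
  | i+1 => colorsAux p i ++ [redCond p (colorsAux p i) i]

/-- `isRed p i = true` iff the greedy procedure colors the entry in position `i` red. -/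
def isRed (p : ℕ → ℕ) (i : ℕ) : Bool := (colorsAux p (i+1)).getD i false

/-- The type of the entry in position `i` of a permutation of `{0,...,n-1}`:
`A` = red left-to-right minimum of the red subsequence, `B` = other red,
`D` = blue right-to-left maximum of the blue subsequence, `C` = other blue. -/
def typeOf (n : ℕ) (p : ℕ → ℕ) (i : ℕ) : Letter :=
  if isRed p i then
    if ∀ j < i, isRed p j = true → p i < p j then Letter.A else Letter.B
  else
    if ∀ j < n, i < j → isRed p j = false → p j < p i then Letter.D else Letter.C

def toNatFun {n : ℕ} (p : Equiv.Perm (Fin n)) : ℕ → ℕ :=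
  fun i => if h : i < n then (p ⟨i, h⟩ : ℕ) else i

def Avoids1324 {n : ℕ} (p : Equiv.Perm (Fin n)) : Prop :=
  ¬ ∃ i₁ i₂ i₃ i₄ : Fin n, i₁ < i₂ ∧ i₂ < i₃ ∧ i₃ < i₄ ∧
    p i₁ < p i₃ ∧ p i₃ < p i₂ ∧ p i₂ < p i₄

/-- The word `w(p)`: types by position. -/
def wWord {n : ℕ} (p : Equiv.Perm (Fin n)) (i : Fin n) : Letter :=
  typeOf n (toNatFun p) i

/-- The word `z(p)`: types by value. -/
def zWord {n : ℕ} (p : Equiv.Perm (Fin n)) (v : Fin n) : Letter :=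
  typeOf n (toNatFun p) (p.symm v)

/-!
If position `i` has letter `C` and position `i + 1` letter `B`, then `i` is blue with a larger
blue entry at some `b > i + 1`, and `i + 1` is red with a smaller red entry at some `r < i`.
Since `i + 1` was colored red although the blue entry `p i` precedes it, `p (i+1) < p i`.
So `r, i, i + 1, b` carry the pattern 1324.
-/

lemma colorsAux_length (p : ℕ → ℕ) (m : ℕ) : (colorsAux p m).length = m := by
  induction m with
  | zero => rfl
  | succ m ih => simp [colorsAux, ih]

lemma getD_colorsAux (p : ℕ → ℕ) {m j : ℕ} (hj : j < m) :
    (colorsAux p m).getD j false = isRed p j := by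
  induction m with
  | zero => omega
  | succ m ih =>
    rcases Nat.lt_or_ge j m with hjm | hjm
    · rw [colorsAux, List.getD_append _ _ _ _ (by rw [colorsAux_length]; exact hjm)]
      exact ih hjm
    · obtain rfl : j = m := by omega
      rfl

lemma isRed_eq_redCond (p : ℕ → ℕ) (i : ℕ) : isRed p i = redCond p (colorsAux p i) i := by
  rw [isRed, colorsAux, List.getD_eq_getElem?_getD,
    List.getElem?_append_right (by rw [colorsAux_length])]
  simp [colorsAux_length]

lemma le_of_isRed_of_not_isRed {p : ℕ → ℕ} {i j : ℕ} (hj : j < i) (hi : isRed p i = true)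
    (hj' : isRed p j = false) : p i ≤ p j := by
  rw [isRed_eq_redCond, redCond, Bool.and_eq_true, decide_eq_true_iff,
    decide_eq_true_iff] at hi
  have := hi.2
  push Not at this
  exact this j hj (by rwa [getD_colorsAux _ hj])

lemma typeOf_eq_B {n : ℕ} {p : ℕ → ℕ} {i : ℕ} (h : typeOf n p i = Letter.B) :
    isRed p i = true ∧ ∃ j < i, isRed p j = true ∧ p j ≤ p i := by
  unfold typeOf at h
  split_ifs at h with hred hmin
  push Not at hmin
  exact ⟨hred, hmin⟩

lemma typeOf_eq_C {n : ℕ} {p : ℕ → ℕ} {i : ℕ} (h : typeOf n p i = Letter.C) :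
    isRed p i = false ∧ ∃ j < n, i < j ∧ isRed p j = false ∧ p i ≤ p j := by
  unfold typeOf at h
  split_ifs at h with hred _ hmax
  push Not at hmax
  exact ⟨by simpa using hred, hmax⟩

lemma toNatFun_of_lt {n : ℕ} (p : Equiv.Perm (Fin n)) {i : ℕ} (hi : i < n) :
    toNatFun p i = p ⟨i, hi⟩ := dif_pos hi

lemma toNatFun_injOn {n : ℕ} (p : Equiv.Perm (Fin n)) {i j : ℕ} (hi : i < n) (hj : j < n)
    (h : toNatFun p i = toNatFun p j) : i = j := by
  rw [toNatFun_of_lt p hi, toNatFun_of_lt p hj] at h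
  simpa using p.injective (Fin.ext h)

lemma Avoids1324.not_le_pattern {n : ℕ} {p : Equiv.Perm (Fin n)} (hp : Avoids1324 p)
    {a b c d : ℕ} (hab : a < b) (hbc : b < c) (hcd : c < d) (hd : d < n)
    (hac : toNatFun p a ≤ toNatFun p c) (hcb : toNatFun p c ≤ toNatFun p b)
    (hbd : toNatFun p b ≤ toNatFun p d) : False := by
  have lt_of_le {x y : ℕ} (hx : x < n) (hy : y < n) (hxy : x ≠ y)
      (hle : toNatFun p x ≤ toNatFun p y) : p ⟨x, hx⟩ < p ⟨y, hy⟩ := by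
    rw [Fin.lt_def, ← toNatFun_of_lt, ← toNatFun_of_lt]
    exact lt_of_le_of_ne hle fun h => hxy (toNatFun_injOn p hx hy h)
  exact hp ⟨⟨a, by omega⟩, ⟨b, by omega⟩, ⟨c, by omega⟩, ⟨d, hd⟩, hab, hbc, hcd,
    lt_of_le _ _ (by omega) hac, lt_of_le _ _ (by omega) hcb, lt_of_le _ _ (by omega) hbd⟩

/-- The word w(p) of a 1324-avoiding permutation has no CB-factor. -/
theorem stmt5 {n : ℕ} (p : Equiv.Perm (Fin n)) (hp : Avoids1324 p) :
    ∀ (i : Fin n) (h : (i : ℕ) + 1 < n),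
      ¬(wWord p i = Letter.C ∧ wWord p ⟨(i : ℕ) + 1, h⟩ = Letter.B) := by
  rintro ⟨i, hi⟩ h ⟨hC, hB⟩
  obtain ⟨hi_blue, b, hbn, hib, hb_blue, hib_le⟩ := typeOf_eq_C (i := i) hC
  obtain ⟨hi1_red, r, hri, hr_red, hr_le⟩ := typeOf_eq_B (i := i + 1) hB
  have hr : r < i := by
    rcases Nat.lt_succ_iff_lt_or_eq.mp hri with hr | rfl
    · exact hr
    · simp [hi_blue] at hr_red
  have hb : i + 1 < b := by
    rcases Nat.lt_or_ge (i + 1) b with hb | hb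
    · exact hb
    · obtain rfl : b = i + 1 := by omega
      simp [hi1_red] at hb_blue
  exact hp.not_le_pattern hr (Nat.lt_succ_self i) hb hbn hr_le
    (le_of_isRed_of_not_isRed (Nat.lt_succ_self i) hi1_red hi_blue) hib_le
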